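/- Let X be a CAT(0) space, Y ⊆ X closed, convex, with sup_{x∈X} d(x,Y) = D < ∞, and let F ⊆ X be a flat on which the function x ↦ d(x,Y) is constant. Then the image π(F) of F under the nearest-point projection π : X → Y is convex. -/

import Mathlib

/-- `m` is a midpoint of `a` and `b`. -/
def IsMidpoint {X : Type*} [MetricSpace X] (m a b : X) : Prop :=
  dist a m = dist a b / 2 ∧ dist b m = dist a b / 2

/-- A complete metric space is CAT(0) if midpoints exist and the CN-inequality of
Bruhat–Tits holds. -/
class CAT0Space (X : Type*) [MetricSpace X] : Prop where
  midpoint_exists : ∀ a b : X, ∃ m, IsMidpoint m a b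
  cn_ineq : ∀ x a b m : X, IsMidpoint m a b →
    dist x m ^ 2 ≤ (dist x a ^ 2 + dist x b ^ 2) / 2 - dist a b ^ 2 / 4

/-- `γ` is a unit-speed geodesic segment from `a` to `b`, parametrised on `[0, d(a,b)]`. -/
def IsGeodesicSegmentBetween {X : Type*} [MetricSpace X] (γ : ℝ → X) (a b : X) : Prop :=
  γ 0 = a ∧ γ (dist a b) = b ∧
    ∀ s ∈ Set.Icc 0 (dist a b), ∀ t ∈ Set.Icc 0 (dist a b), dist (γ s) (γ t) = |s - t|

/-- A subset of a metric space is convex if it contains every geodesic segment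
between any two of its points. -/
def SetConvex {X : Type*} [MetricSpace X] (S : Set X) : Prop :=
  ∀ a ∈ S, ∀ b ∈ S, ∀ γ : ℝ → X, IsGeodesicSegmentBetween γ a b →
    ∀ t ∈ Set.Icc 0 (dist a b), γ t ∈ S

/-- `F` is a flat: an isometrically embedded copy of some Euclidean space. -/
def IsFlat {X : Type*} [MetricSpace X] (n : ℕ) (F : Set X) : Prop :=
  ∃ φ : EuclideanSpace ℝ (Fin n) → X, Isometry φ ∧ Set.range φ = F

/-! In a CAT(0) space the distance between two constant-speed geodesics is a convex function of
the parameter. For `x, x' ∈ F` and a point `γ t` of the geodesic from `π x` to `π x'`, the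
corresponding point `m` of the flat segment from `x` to `x'` is thus within `D` of `γ t`, while
no point of `Y` is closer than `D` to `m`. Nearest points on convex sets being unique,
`γ t = π m`. The geodesics needed to exploit the convexity of `Y` are built from iterated
midpoints, using completeness. -/

open Set Filter Topology unitInterval

theorem natCast_div_two_pow_mem_unitInterval {n k : ℕ} (hk : k ≤ 2 ^ n) :
    (k : ℝ) / 2 ^ n ∈ I :=
  ⟨by positivity, div_le_one_of_le₀ (by exact_mod_cast hk) (by positivity)⟩

theorem dyadic_induction {P : ℝ → Prop} (h0 : P 0) (h1 : P 1)
    (hmid : ∀ r ∈ I, ∀ r' ∈ I, P r → P r' → P ((r + r') / 2)) :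
    ∀ n k : ℕ, k ≤ 2 ^ n → P (k / 2 ^ n) := by
  intro n
  induction n with
  | zero =>
    intro k hk
    interval_cases k <;> simpa
  | succ n ih =>
    intro k hk
    rw [pow_succ] at hk
    obtain ⟨j, rfl | rfl⟩ := Nat.even_or_odd' k
    · convert ih j (by omega) using 1
      push_cast; rw [pow_succ]; field_simp
    · convert hmid _ (natCast_div_two_pow_mem_unitInterval (by omega : j ≤ 2 ^ n))
        _ (natCast_div_two_pow_mem_unitInterval (by omega : j + 1 ≤ 2 ^ n))
        (ih j (by omega)) (ih (j + 1) (by omega)) using 1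
      push_cast; rw [pow_succ]; field_simp; ring

theorem nat_floor_mul_two_pow_le {r : ℝ} (hr : r ≤ 1) (n : ℕ) :
    ⌊r * 2 ^ n⌋₊ ≤ 2 ^ n :=
  Nat.floor_le_of_le (by push_cast; nlinarith [pow_pos (two_pos (α := ℝ)) n])

theorem tendsto_nat_floor_mul_two_pow_div {r : ℝ} (hr : 0 ≤ r) :
    Tendsto (fun n : ℕ => (⌊r * 2 ^ n⌋₊ : ℝ) / 2 ^ n) atTop (𝓝 r) :=
  (tendsto_nat_floor_mul_div_atTop hr).comp (tendsto_pow_atTop_atTop_of_one_lt one_lt_two)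

theorem apply_le_of_midpoint_convex {f : ℝ → ℝ} (hf : ContinuousOn f I)
    (hmid : ∀ r ∈ I, ∀ r' ∈ I, f ((r + r') / 2) ≤ (f r + f r') / 2)
    {r : ℝ} (hr : r ∈ I) : f r ≤ (1 - r) * f 0 + r * f 1 := by
  set a : ℕ → ℝ := fun n => ⌊r * 2 ^ n⌋₊ / 2 ^ n
  have ha : Tendsto a atTop (𝓝 r) := tendsto_nat_floor_mul_two_pow_div hr.1
  have hdyadic : ∀ n, f (a n) ≤ (1 - a n) * f 0 + a n * f 1 := fun n =>
    dyadic_induction (P := fun s => f s ≤ (1 - s) * f 0 + s * f 1) (by simp) (by simp)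
      (fun s hs s' hs' h h' => (hmid s hs s' hs').trans (by linarith)) n _
      (nat_floor_mul_two_pow_le hr.2 n)
  have ha_mem : ∀ n, a n ∈ I := fun n =>
    natCast_div_two_pow_mem_unitInterval (nat_floor_mul_two_pow_le hr.2 n)
  have hfa : Tendsto (fun n => f (a n)) atTop (𝓝 (f r)) :=
    (hf r hr).tendsto.comp (tendsto_nhdsWithin_iff.2 ⟨ha, .of_forall ha_mem⟩)
  exact le_of_tendsto_of_tendsto' hfa
    (((tendsto_const_nhds.sub ha).mul_const _).add (ha.mul_const _)) hdyadic

section Geodesic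

variable {X : Type*} [MetricSpace X]

theorem dist_eq_of_equally_spaced {z : ℕ → X} {N : ℕ} {δ : ℝ}
    (hstep : ∀ i < N, dist (z i) (z (i + 1)) = δ) (hend : dist (z 0) (z N) = N * δ)
    {i j : ℕ} (hi : i ≤ N) (hj : j ≤ N) : dist (z i) (z j) = |(i : ℝ) - j| * δ := by
  have hle : ∀ i j, i ≤ j → j ≤ N → dist (z i) (z j) ≤ ((j : ℝ) - i) * δ := by
    intro i j hij hj
    calc dist (z i) (z j) ≤ ∑ k ∈ Finset.Ico i j, dist (z k) (z (k + 1)) :=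
          dist_le_Ico_sum_dist z hij
      _ = ((j : ℝ) - i) * δ := by
          rw [Finset.sum_congr rfl fun k hk => hstep k (by simp at hk; omega)]
          simp [Nat.cast_sub hij]
  have heq : ∀ i j, i ≤ j → j ≤ N → dist (z i) (z j) = ((j : ℝ) - i) * δ := by
    intro i j hij hj
    refine (hle i j hij hj).antisymm ?_
    have := dist_triangle4 (z 0) (z i) (z j) (z N)
    have := hle 0 i (Nat.zero_le i) (hij.trans hj)
    have := hle j N hj le_rfl
    push_cast at *
    linarith
  rcases le_total i j with hij | hji
  · rw [heq i j hij hj, abs_sub_comm, abs_of_nonneg (by simpa using hij)]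
  · rw [dist_comm, heq j i hji hi, abs_of_nonneg (by simpa using hji)]

namespace IsMidpoint

theorem symm {m a b : X} (h : IsMidpoint m a b) : IsMidpoint m b a :=
  ⟨by rw [h.2, dist_comm], by rw [h.1, dist_comm]⟩

variable [CAT0Space X]

theorem dist_le_half_dist {a₁ a₂ b m₁ m₂ : X} (h₁ : IsMidpoint m₁ a₁ b)
    (h₂ : IsMidpoint m₂ a₂ b) : dist m₁ m₂ ≤ dist a₁ a₂ / 2 := by
  have cn₁ := CAT0Space.cn_ineq m₁ a₂ b m₂ h₂
  have cn₂ := CAT0Space.cn_ineq a₂ a₁ b m₁ h₁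
  rw [dist_comm m₁ a₂, dist_comm m₁ b, h₁.2] at cn₁
  rw [dist_comm a₂ a₁] at cn₂
  nlinarith [dist_nonneg (x := m₁) (y := m₂), dist_nonneg (x := a₁) (y := a₂)]

theorem dist_le_avg {a₁ b₁ a₂ b₂ m₁ m₂ : X} (h₁ : IsMidpoint m₁ a₁ b₁)
    (h₂ : IsMidpoint m₂ a₂ b₂) :
    dist m₁ m₂ ≤ (dist a₁ a₂ + dist b₁ b₂) / 2 := by
  obtain ⟨q, hq⟩ := CAT0Space.midpoint_exists a₂ b₁
  have := h₁.dist_le_half_dist hq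
  have := hq.symm.dist_le_half_dist h₂.symm
  linarith [dist_triangle m₁ q m₂]

end IsMidpoint

section DyadicPoints

variable [CAT0Space X]

noncomputable def chosenMidpoint (a b : X) : X := (CAT0Space.midpoint_exists a b).choose

theorem isMidpoint_chosenMidpoint (a b : X) : IsMidpoint (chosenMidpoint a b) a b :=
  (CAT0Space.midpoint_exists a b).choose_spec

/-- The point with parameter `k / 2 ^ n` on a segment from `p` to `q` built by iterated
midpoints. -/
noncomputable def dyadicPoint (p q : X) : ℕ → ℕ → X
  | 0, k => if k = 0 then p else q
  | n + 1, k => if k % 2 = 0 then dyadicPoint p q n (k / 2)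
      else chosenMidpoint (dyadicPoint p q n (k / 2)) (dyadicPoint p q n (k / 2 + 1))

variable (p q : X)

theorem dyadicPoint_two_mul (n j : ℕ) :
    dyadicPoint p q (n + 1) (2 * j) = dyadicPoint p q n j := by
  simp [dyadicPoint]

theorem dyadicPoint_two_mul_add_one (n j : ℕ) :
    dyadicPoint p q (n + 1) (2 * j + 1) =
      chosenMidpoint (dyadicPoint p q n j) (dyadicPoint p q n (j + 1)) := by
  simp [dyadicPoint, Nat.add_mod, show (2 * j + 1) / 2 = j by omega]

theorem dyadicPoint_zero (n : ℕ) : dyadicPoint p q n 0 = p := by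
  induction n with
  | zero => simp [dyadicPoint]
  | succ n ih => simpa using (dyadicPoint_two_mul p q n 0).trans ih

theorem dyadicPoint_two_pow (n : ℕ) : dyadicPoint p q n (2 ^ n) = q := by
  induction n with
  | zero => simp [dyadicPoint]
  | succ n ih => rw [pow_succ', dyadicPoint_two_mul, ih]

theorem dyadicPoint_mul_two_pow (n m k : ℕ) :
    dyadicPoint p q (n + m) (k * 2 ^ m) = dyadicPoint p q n k := by
  induction m with
  | zero => simp
  | succ m ih => rw [pow_succ', mul_left_comm, ← add_assoc, dyadicPoint_two_mul, ih]

theorem dist_dyadicPoint_succ (n : ℕ) :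
    ∀ k < 2 ^ n, dist (dyadicPoint p q n k) (dyadicPoint p q n (k + 1)) = dist p q / 2 ^ n := by
  induction n with
  | zero =>
    intro k hk
    obtain rfl : k = 0 := by omega
    simp [dyadicPoint]
  | succ n ih =>
    intro k hk
    rw [pow_succ] at hk
    obtain ⟨j, rfl | rfl⟩ := Nat.even_or_odd' k
    · rw [dyadicPoint_two_mul_add_one, dyadicPoint_two_mul, (isMidpoint_chosenMidpoint _ _).1,
        ih j (by omega), pow_succ]
      ring
    · rw [show 2 * j + 1 + 1 = 2 * (j + 1) by ring, dyadicPoint_two_mul_add_one,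
        dyadicPoint_two_mul, dist_comm, (isMidpoint_chosenMidpoint _ _).2, ih j (by omega),
        pow_succ]
      ring

theorem dist_dyadicPoint {n m k l : ℕ} (hk : k ≤ 2 ^ n) (hl : l ≤ 2 ^ m) :
    dist (dyadicPoint p q n k) (dyadicPoint p q m l) =
      |(k : ℝ) / 2 ^ n - l / 2 ^ m| * dist p q := by
  rw [← dyadicPoint_mul_two_pow p q n m k, ← dyadicPoint_mul_two_pow p q m n l, add_comm m n]
  have hpow : (0 : ℝ) < 2 ^ (n + m) := by positivity
  rw [dist_eq_of_equally_spaced (dist_dyadicPoint_succ p q (n + m))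
    (by rw [dyadicPoint_zero, dyadicPoint_two_pow]; push_cast; field_simp)
    (by rw [pow_add]; exact Nat.mul_le_mul_right _ hk)
    (by rw [pow_add, mul_comm (2 ^ n)]; exact Nat.mul_le_mul_right _ hl)]
  have hrescale : (k : ℝ) / 2 ^ n - l / 2 ^ m =
      (((k * 2 ^ m : ℕ) : ℝ) - (l * 2 ^ n : ℕ)) / 2 ^ (n + m) := by
    push_cast; rw [pow_add]; field_simp
  rw [hrescale, abs_div, abs_of_pos hpow]
  ring

end DyadicPoints

def IsGeodesicPath (c : ℝ → X) (p q : X) : Prop :=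
  c 0 = p ∧ c 1 = q ∧ ∀ r ∈ I, ∀ r' ∈ I, dist (c r) (c r') = |r - r'| * dist p q

namespace IsGeodesicPath

variable {c : ℝ → X} {p q : X}

theorem continuousOn (hc : IsGeodesicPath c p q) : ContinuousOn c I :=
  (LipschitzOnWith.of_dist_le_mul (K := nndist p q) fun r hr r' hr' => by
    rw [hc.2.2 r hr r' hr', coe_nndist, Real.dist_eq, mul_comm]).continuousOn

theorem isMidpoint (hc : IsGeodesicPath c p q) {r r' : ℝ} (hr : r ∈ I)
    (hr' : r' ∈ I) : IsMidpoint (c ((r + r') / 2)) (c r) (c r') := by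
  have hmid : (r + r') / 2 ∈ I := ⟨by linarith [hr.1, hr'.1], by linarith [hr.2, hr'.2]⟩
  constructor
  · rw [hc.2.2 _ hr _ hmid, hc.2.2 _ hr _ hr', show r - (r + r') / 2 = (r - r') / 2 by ring,
      abs_div, abs_two]
    ring
  · rw [hc.2.2 _ hr' _ hmid, hc.2.2 _ hr _ hr', show r' - (r + r') / 2 = -((r - r') / 2) by ring,
      abs_neg, abs_div, abs_two]
    ring

theorem isGeodesicSegmentBetween (hc : IsGeodesicPath c p q) :
    IsGeodesicSegmentBetween (fun t => c (t / dist p q)) p q := by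
  rcases eq_or_ne (dist p q) 0 with hpq | hpq
  · have hq : q = p := (dist_eq_zero.1 hpq).symm
    refine ⟨by simpa using hc.1, by simpa [hpq, hq] using hc.1, fun s hs t ht => ?_⟩
    rw [hpq] at hs ht
    obtain rfl : s = 0 := le_antisymm hs.2 hs.1
    obtain rfl : t = 0 := le_antisymm ht.2 ht.1
    simp
  · have hmem : ∀ t ∈ Icc 0 (dist p q), t / dist p q ∈ I := fun t ht =>
      ⟨div_nonneg ht.1 dist_nonneg, div_le_one_of_le₀ ht.2 dist_nonneg⟩
    refine ⟨by simpa using hc.1, by simpa [hpq] using hc.2.1, fun s hs t ht => ?_⟩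
    rw [hc.2.2 _ (hmem s hs) _ (hmem t ht), ← sub_div, abs_div, abs_of_nonneg dist_nonneg,
      div_mul_cancel₀ _ hpq]

end IsGeodesicPath

theorem IsGeodesicSegmentBetween.isGeodesicPath {γ : ℝ → X} {p q : X}
    (hγ : IsGeodesicSegmentBetween γ p q) : IsGeodesicPath (fun r => γ (r * dist p q)) p q := by
  have hmem : ∀ r ∈ I, r * dist p q ∈ Icc 0 (dist p q) := fun r hr =>
    ⟨mul_nonneg hr.1 dist_nonneg, mul_le_of_le_one_left dist_nonneg hr.2⟩
  refine ⟨by simpa using hγ.1, by simpa using hγ.2.1, fun r hr r' hr' => ?_⟩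
  rw [hγ.2.2 _ (hmem r hr) _ (hmem r' hr'), ← sub_mul, abs_mul, abs_of_nonneg dist_nonneg]

theorem Isometry.isGeodesicPath_lineMap {E : Type*} [NormedAddCommGroup E] [NormedSpace ℝ E]
    {φ : E → X} (hφ : Isometry φ) (u v : E) :
    IsGeodesicPath (fun r => φ (AffineMap.lineMap u v r)) (φ u) (φ v) := by
  refine ⟨by simp, by simp, fun r _ r' _ => ?_⟩
  simp only [hφ.dist_eq, dist_lineMap_lineMap, Real.dist_eq]

theorem CauchySeq.of_dist_le_mul {u : ℕ → X} {a : ℕ → ℝ} (ha : CauchySeq a) {C : ℝ}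
    (hC : 0 ≤ C) (h : ∀ n m, dist (u n) (u m) ≤ C * dist (a n) (a m)) : CauchySeq u := by
  obtain ⟨b, -, hb, hb0⟩ := cauchySeq_iff_le_tendsto_0.1 ha
  refine cauchySeq_of_le_tendsto_0 (fun N => C * b N)
    (fun n m N hn hm => (h n m).trans (mul_le_mul_of_nonneg_left (hb n m N hn hm) hC)) ?_
  simpa using hb0.const_mul C

theorem exists_isGeodesicPath [CompleteSpace X] [CAT0Space X] (p q : X) :
    ∃ c : ℝ → X, IsGeodesicPath c p q := by
  have : Nonempty X := ⟨p⟩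
  set a : ℝ → ℕ → ℝ := fun r n => ⌊r * 2 ^ n⌋₊ / 2 ^ n
  set u : ℝ → ℕ → X := fun r n => dyadicPoint p q n ⌊r * 2 ^ n⌋₊
  have hu : ∀ r ∈ I, ∀ r' ∈ I, ∀ n m,
      dist (u r n) (u r' m) = dist (a r n) (a r' m) * dist p q := fun r hr r' hr' n m =>
    dist_dyadicPoint p q (nat_floor_mul_two_pow_le hr.2 n) (nat_floor_mul_two_pow_le hr'.2 m)
  have ha : ∀ r ∈ I, Tendsto (a r) atTop (𝓝 r) := fun r hr =>
    tendsto_nat_floor_mul_two_pow_div hr.1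
  have hlim : ∀ r ∈ I, Tendsto (u r) atTop (𝓝 (limUnder atTop (u r))) :=
    fun r hr => ((ha r hr).cauchySeq.of_dist_le_mul dist_nonneg fun n m =>
      ((hu r hr r hr n m).trans (mul_comm _ _)).le).tendsto_limUnder
  have h0 : u 0 = fun _ => p := by funext n; simp [u, dyadicPoint_zero]
  have h1 : u 1 = fun _ => q := by
    funext n
    simp only [u, one_mul]
    rw [show (2 : ℝ) ^ n = ((2 ^ n : ℕ) : ℝ) by push_cast; rfl, Nat.floor_natCast,
      dyadicPoint_two_pow]
  refine ⟨fun r => limUnder atTop (u r), ?_, ?_, fun r hr r' hr' => ?_⟩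
  · exact tendsto_nhds_unique (hlim 0 unitInterval.zero_mem) (h0 ▸ tendsto_const_nhds)
  · exact tendsto_nhds_unique (hlim 1 unitInterval.one_mem) (h1 ▸ tendsto_const_nhds)
  · refine tendsto_nhds_unique ((hlim r hr).dist (hlim r' hr')) ?_
    simp only [hu r hr r' hr', Real.dist_eq]
    exact (((ha r hr).sub (ha r' hr')).abs).mul_const _

theorem exists_isGeodesicSegmentBetween [CompleteSpace X] [CAT0Space X] (p q : X) :
    ∃ γ : ℝ → X, IsGeodesicSegmentBetween γ p q :=
  let ⟨_, hc⟩ := exists_isGeodesicPath p q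
  ⟨_, hc.isGeodesicSegmentBetween⟩

theorem IsGeodesicSegmentBetween.isMidpoint {γ : ℝ → X} {a b : X}
    (hγ : IsGeodesicSegmentBetween γ a b) : IsMidpoint (γ (dist a b / 2)) a b := by
  have hd := dist_nonneg (x := a) (y := b)
  have hhalf : dist a b / 2 ∈ Icc 0 (dist a b) := ⟨by positivity, by linarith⟩
  have ha := hγ.2.2 0 ⟨le_rfl, hd⟩ _ hhalf
  have hb := hγ.2.2 _ ⟨hd, le_rfl⟩ _ hhalf
  rw [hγ.1] at ha
  rw [hγ.2.1] at hb
  refine ⟨ha.trans ?_, hb.trans ?_⟩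
  · rw [zero_sub, abs_neg, abs_of_nonneg (by positivity)]
  · rw [abs_of_nonneg (by linarith)]
    ring

variable [CAT0Space X]

theorem IsGeodesicPath.dist_apply_le {c₁ c₂ : ℝ → X} {a₁ b₁ a₂ b₂ : X}
    (hc₁ : IsGeodesicPath c₁ a₁ b₁) (hc₂ : IsGeodesicPath c₂ a₂ b₂) {r : ℝ}
    (hr : r ∈ I) : dist (c₁ r) (c₂ r) ≤ (1 - r) * dist a₁ a₂ + r * dist b₁ b₂ := by
  have := apply_le_of_midpoint_convex (f := fun s => dist (c₁ s) (c₂ s))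
    (continuous_dist.comp_continuousOn (hc₁.continuousOn.prodMk hc₂.continuousOn))
    (fun s hs s' hs' => (hc₁.isMidpoint hs hs').dist_le_avg (hc₂.isMidpoint hs hs')) hr
  simpa [hc₁.1, hc₂.1, hc₁.2.1, hc₂.2.1] using this

theorem SetConvex.eq_of_isMinOn [CompleteSpace X] {Y : Set X} (hY : SetConvex Y) {x y y' : X}
    (hy : y ∈ Y) (hmin : IsMinOn (dist x) Y y) (hy' : y' ∈ Y) (h : dist x y' ≤ dist x y) :
    y' = y := by
  obtain ⟨γ, hγ⟩ := exists_isGeodesicSegmentBetween y y'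
  have hw : γ (dist y y' / 2) ∈ Y :=
    hY y hy y' hy' γ hγ _ ⟨by positivity, by linarith [dist_nonneg (x := y) (y := y')]⟩
  have hcn := CAT0Space.cn_ineq x y y' _ hγ.isMidpoint
  have hle : dist x y ≤ dist x (γ (dist y y' / 2)) := isMinOn_iff.1 hmin _ hw
  have : dist y' y ≤ 0 := by
    rw [dist_comm]
    nlinarith [dist_nonneg (x := x) (y := y), dist_nonneg (x := x) (y := y'),
      dist_nonneg (x := y) (y := y')]
  exact dist_le_zero.1 this

end Geodesic

theorem proj_image_of_flat_convex_general {X : Type*} [MetricSpace X] [CompleteSpace X] [CAT0Space X]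
    (Y : Set X) (hYconv : SetConvex Y) (D : ℝ)
    (π : X → X) (hπmem : ∀ x, π x ∈ Y)
    (hπnear : ∀ x, ∀ y ∈ Y, dist x (π x) ≤ dist x y)
    (n : ℕ) (F : Set X) (hF : IsFlat n F)
    (hconst : ∀ x ∈ F, Metric.infDist x Y = D) :
    SetConvex (π '' F) := by
  have hπmin : ∀ x, IsMinOn (dist x) Y (π x) := fun x => isMinOn_iff.2 (hπnear x)
  have hdist : ∀ x ∈ F, dist x (π x) = D := fun x hx => hconst x hx ▸
    le_antisymm ((Metric.le_infDist ⟨_, hπmem x⟩).2 (hπnear x))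
      (Metric.infDist_le_dist_of_mem (hπmem x))
  rintro _ ⟨_, hx, rfl⟩ _ ⟨_, hx', rfl⟩ γ hγ t ht
  obtain ⟨φ, hφ, rfl⟩ := hF
  obtain ⟨⟨u, rfl⟩, ⟨v, rfl⟩⟩ := And.intro hx hx'
  set L := dist (π (φ u)) (π (φ v))
  have hr : t / L ∈ I := ⟨div_nonneg ht.1 dist_nonneg, div_le_one_of_le₀ ht.2 dist_nonneg⟩
  have hγt : γ (t / L * L) = γ t := by
    rw [div_mul_cancel_of_imp fun hL => le_antisymm (hL ▸ ht.2) ht.1]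
  set m := φ (AffineMap.lineMap u v (t / L))
  have hm : dist m (γ t) ≤ dist m (π m) :=
    calc dist m (γ t)
        ≤ (1 - t / L) * dist (φ u) (π (φ u)) + t / L * dist (φ v) (π (φ v)) :=
          hγt ▸ (hφ.isGeodesicPath_lineMap u v).dist_apply_le hγ.isGeodesicPath hr
      _ = dist m (π m) := by
          rw [hdist _ (mem_range_self u), hdist _ (mem_range_self v), hdist m (mem_range_self _)]
          ring
  have hγY : γ t ∈ Y := hYconv _ (hπmem _) _ (hπmem _) γ hγ t ht
  exact ⟨m, mem_range_self _, (hYconv.eq_of_isMinOn (hπmem m) (hπmin m) hγY hm).symm⟩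

/-- Let `X` be a complete CAT(0) space, `Y ⊆ X` a nonempty closed convex subset of
coradius `D < ∞`, and `F ⊆ X` a flat on which the distance to `Y` is constantly `D`.
Then the image of `F` under the nearest-point projection `π` onto `Y` is convex. -/
theorem proj_image_of_flat_convex {X : Type*} [MetricSpace X] [CompleteSpace X] [CAT0Space X]
    (Y : Set X) (hYne : Y.Nonempty) (hYcl : IsClosed Y) (hYconv : SetConvex Y)
    (D : ℝ) (hD : ∀ x : X, Metric.infDist x Y ≤ D)
    (π : X → X) (hπmem : ∀ x, π x ∈ Y)
    (hπnear : ∀ x, ∀ y ∈ Y, dist x (π x) ≤ dist x y)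
    (n : ℕ) (F : Set X) (hF : IsFlat n F)
    (hconst : ∀ x ∈ F, Metric.infDist x Y = D) :
    SetConvex (π '' F) :=
  proj_image_of_flat_convex_general Y hYconv D π hπmem hπnear n F hF hconst
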